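/- arXiv:2209.01825 — 2 statements merged into one kernel-verified Lean document; each statement's English description precedes it below -/
import Mathlib

section
/- Soundness of defect detection: Let α be a type, and let S_before, S_after : α → Prop be the success predicates of a method before and after refactoring, and P_before, P_after : α → Prop be inferred property predicates. Suppose P_before over-approximates S_before (i.e., ∀ x, P_before x → S_before x) and P_after under-approximates S_after (i.e., ∀ x, S_after x → P_after x). If the detection formula ∀ x, P_before x → P_after x is false, then there exists an input x such that the method computes successfully before the refactoring (S_before x) but fails after it (¬ S_after x). -/
theorem soundness_of_defect_detection {α : Type*}
    (S_before S_after P_before P_after : α → Prop)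
    (hover : ∀ x, P_before x → S_before x)
    (hunder : ∀ x, S_after x → P_after x)
    (hdetect : ¬ (∀ x, P_before x → P_after x)) :
    ∃ x, S_before x ∧ ¬ S_after x := by
  push_neg at hdetect
  obtain ⟨x, hP, hnP⟩ := hdetect
  exact ⟨x, hover x hP, fun hS => hnP (hunder x hS)⟩
end

section
/- Completeness of defect detection: Let α be a type, and let S_before, S_after : α → Prop be the success predicates of a method before and after refactoring, and P_before, P_after : α → Prop be inferred property predicates. Suppose P_before under-approximates S_before (i.e., ∀ x, S_before x → P_before x) and P_after over-approximates S_after (i.e., ∀ x, P_after x → S_after x). If there exists an input x such that S_before x holds but S_after x fails (i.e., the refactoring changed the method's properties by introducing a defect), then the detection formula ∀ x, P_before x → P_after x is false. -/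
theorem completeness_of_defect_detection {α : Type*}
    (S_before S_after P_before P_after : α → Prop)
    (hunder : ∀ x, S_before x → P_before x)
    (hover : ∀ x, P_after x → S_after x)
    (hdefect : ∃ x, S_before x ∧ ¬ S_after x) :
    ¬ (∀ x, P_before x → P_after x) := by
  obtain ⟨x, hS, hnS⟩ := hdefect
  exact fun h => hnS (hover x (h x (hunder x hS)))
end
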